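/- arXiv:1211.1262 — 3 statements merged into one kernel-verified Lean document; each statement's English description precedes it below -/
import Mathlib

section
/- In a Pasch geometry, if (a, b, c) ∈ Δ then (c#, b#, a#) ∈ Δ. -/
/-- A Pasch geometry on a type `A`: base point `e`, ternary relation `Δ`,
and the involution `inv` (written `#` in the paper), satisfying axioms (1)-(4). -/
structure PaschGeometry (A : Type*) where
  e : A
  Δ : A → A → A → Prop
  inv : A → A
  inv_spec : ∀ a, Δ a (inv a) e
  inv_unique : ∀ a b, Δ a b e → b = inv a
  inv_e : inv e = e
  inv_inv : ∀ a, inv (inv a) = a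
  cyc : ∀ a b c, Δ a b c → Δ b c a
  pasch : ∀ a1 a2 a3 a4 a5, Δ a1 a2 a3 → Δ a1 a4 a5 →
    ∃ a6, Δ a6 (inv a4) a2 ∧ Δ a6 a5 (inv a3)

/-- A Pasch geometry is sharp if for each `a, b` there is at most one `c` with `(a,b,c) ∈ Δ`. -/
def PaschGeometry.Sharp {A : Type*} (G : PaschGeometry A) : Prop :=
  ∀ a b c c', G.Δ a b c → G.Δ a b c' → c = c'

/-- A geometry morphism preserves the base point and the relation `Δ`. -/
def IsMorphism {A B : Type*} (GA : PaschGeometry A) (GB : PaschGeometry B)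
    (f : A → B) : Prop :=
  f GA.e = GB.e ∧ ∀ x y z, GA.Δ x y z → GB.Δ (f x) (f y) (f z)

/-- A geometry homomorphism is a morphism with the lifting property. -/
def IsHom {A B : Type*} (GA : PaschGeometry A) (GB : PaschGeometry B)
    (f : A → B) : Prop :=
  IsMorphism GA GB f ∧
    ∀ x y b, GB.Δ (f x) (f y) b → ∃ z, f z = b ∧ GA.Δ x y z

/-- `S` is a subgeometry of `A`. -/
def IsSubgeometry {A : Type*} (G : PaschGeometry A) (S : Set A) : Prop :=
  G.e ∈ S ∧ ∀ s1 s2 x, s1 ∈ S → s2 ∈ S → G.Δ s1 s2 x → x ∈ S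

theorem stmt1 {A : Type*} (G : PaschGeometry A) (a b c : A)
    (h : G.Δ a b c) : G.Δ (G.inv c) (G.inv b) (G.inv a) := by
  obtain ⟨x, h1, h2⟩ := G.pasch a (G.inv a) G.e b c (G.inv_spec a) h
  rw [G.inv_e] at h2
  have hc : c = G.inv x := G.inv_unique x c h2
  have hx : x = G.inv c := by rw [hc, G.inv_inv]
  rwa [hx] at h1
end

section
/- Every sharp Pasch geometry carries a group structure: defining a·b to be c# where c is the unique element with (a, b, c) ∈ Δ, with identity e and inverse a#, the axioms of a group hold. -/
theorem stmt4 {A : Type*} (G : PaschGeometry A) (hs : G.Sharp) :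
    (exists mul : A -> A -> A, forall a b, G.Δ a b (G.inv (mul a b))) /\
    forall mul : A -> A -> A, (forall a b, G.Δ a b (G.inv (mul a b))) ->
      (forall a b c, mul (mul a b) c = mul a (mul b c)) /\
      (forall a, mul G.e a = a) /\ (forall a, mul a G.e = a) /\
      (forall a, mul a (G.inv a) = G.e) /\ (forall a, mul (G.inv a) a = G.e) := by
  classical
  have inv_inj : ∀ x y : A, G.inv x = G.inv y → x = y := by
    intro x y h
    have := congrArg G.inv h
    rwa [G.inv_inv, G.inv_inv] at this
  have h1 : ∀ a, G.Δ a (G.inv a) G.e := G.inv_spec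
  have h2 : ∀ a, G.Δ (G.inv a) G.e a := fun a => G.cyc _ _ _ (h1 a)
  have h3 : ∀ a, G.Δ G.e a (G.inv a) := fun a => G.cyc _ _ _ (h2 a)
  have h1' : ∀ a, G.Δ (G.inv a) a G.e := fun a => by
    have := h1 (G.inv a); rwa [G.inv_inv] at this
  have h2' : ∀ a, G.Δ a G.e (G.inv a) := fun a => G.cyc _ _ _ (h1' a)
  have h3' : ∀ a, G.Δ G.e (G.inv a) a := fun a => G.cyc _ _ _ (h2' a)
  have exist : ∀ a b, ∃ c, G.Δ a b c := by
    intro a b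
    obtain ⟨a6, hA, _⟩ := G.pasch G.e b (G.inv b) (G.inv a) a (h3 b) (h3' a)
    rw [G.inv_inv] at hA
    exact ⟨a6, G.cyc _ _ _ hA⟩
  constructor
  · refine ⟨fun a b => G.inv (Classical.choose (exist a b)), fun a b => ?_⟩
    rw [G.inv_inv]
    exact Classical.choose_spec (exist a b)
  · intro mul hmul
    refine ⟨?_, ?_, ?_, ?_, ?_⟩
    · intro a b c
      obtain ⟨a6, hA, hB⟩ := G.pasch a b (G.inv (mul a b)) (mul b c)
        (G.inv (mul a (mul b c))) (hmul a b) (hmul a (mul b c))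
      rw [G.inv_inv] at hB
      -- hA : Δ a6 (bc)# b, hB : Δ a6 (a(bc))# (ab)
      have hcb : G.Δ (G.inv (mul b c)) b c := by
        have := G.cyc _ _ _ (G.cyc _ _ _ (hmul b c)); exact this
      have hca : G.Δ (G.inv (mul b c)) b a6 := G.cyc _ _ _ hA
      have hce : c = a6 := hs _ _ _ _ hcb hca
      subst hce
      have hfin : G.Δ (mul a b) c (G.inv (mul a (mul b c))) :=
        G.cyc _ _ _ (G.cyc _ _ _ hB)
      exact inv_inj _ _ (hs _ _ _ _ (hmul (mul a b) c) hfin)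
    · intro a
      exact inv_inj _ _ (hs _ _ _ _ (hmul G.e a) (h3 a))
    · intro a
      exact inv_inj _ _ (hs _ _ _ _ (hmul a G.e) (h2' a))
    · intro a
      have : G.inv (mul a (G.inv a)) = G.e := hs _ _ _ _ (hmul a (G.inv a)) (h1 a)
      have := congrArg G.inv this
      rwa [G.inv_inv, G.inv_e] at this
    · intro a
      have : G.inv (mul (G.inv a) a) = G.e := hs _ _ _ _ (hmul (G.inv a) a) (h1' a)
      have := congrArg G.inv this
      rwa [G.inv_inv, G.inv_e] at this
end

section
/- Every geometry homomorphism between sharp Pasch geometries is a group homomorphism of the associated groups. -/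
theorem stmt10 {A B : Type*} (GA : PaschGeometry A) (GB : PaschGeometry B)
    (hA : GA.Sharp) (hB : GB.Sharp)
    (mulA : A -> A -> A) (hmA : forall a b, GA.Δ a b (GA.inv (mulA a b)))
    (mulB : B -> B -> B) (hmB : forall a b, GB.Δ a b (GB.inv (mulB a b)))
    (f : A -> B) (hf : IsHom GA GB f) :
    forall x y, f (mulA x y) = mulB (f x) (f y) := by
  obtain ⟨⟨he, hΔ⟩, _⟩ := hf
  have hinv : ∀ a, f (GA.inv a) = GB.inv (f a) := by
    intro a
    apply GB.inv_unique
    have := hΔ a (GA.inv a) GA.e (GA.inv_spec a)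
    rwa [he] at this
  intro x y
  have h1 := hΔ x y _ (hmA x y)
  have h2 := hmB (f x) (f y)
  have := hB _ _ _ _ h1 h2
  rw [hinv] at this
  have := congrArg GB.inv this
  rwa [GB.inv_inv, GB.inv_inv] at this
end
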